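/- Let (a_{n,λ}) and (b_{n,λ}) be sequences of real numbers. Then a_{n,λ} = ∑_{k=0}^{n} C(n,k)·(1)_{n−k,λ}·b_{k,λ} holds for all n ≥ 0 if and only if b_{n,λ} = ∑_{k=0}^{n} C(n,k)·(−1)^{n−k}·⟨1⟩_{n−k,λ}·a_{k,λ} holds for all n ≥ 0. -/

import Mathlib

open Finset

noncomputable def dff (lam x : ℝ) (n : ℕ) : ℝ := ∏ i ∈ Finset.range n, (x - i * lam)

noncomputable def drf (lam x : ℝ) (n : ℕ) : ℝ := ∏ i ∈ Finset.range n, (x + i * lam)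

/-!
Binomial convolution is multiplication of exponential generating functions, so `a = f ⋆ b` and
`b = g ⋆ a` are equivalent as soon as `egf f * egf g = 1`. The λ-falling factorials satisfy the
Chu–Vandermonde identity `(x + y)_{n,λ} = ∑ C(n,k) (x)_{k,λ} (y)_{n-k,λ}`, so
`egf (x)_{·,λ} * egf (-x)_{·,λ} = egf (0)_{·,λ} = 1`, and `(-1)_{m,λ} = (-1)^m ⟨1⟩_{m,λ}`.
-/

section BinomialConvolution

variable {R : Type*} [CommSemiring R]

def binomConv (f g : ℕ → R) (n : ℕ) : R :=
  ∑ ij ∈ antidiagonal n, (n.choose ij.1 : R) * (f ij.1 * g ij.2)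

theorem binomConv_eq_sum_range (f g : ℕ → R) (n : ℕ) :
    binomConv f g n = ∑ k ∈ range (n + 1), (n.choose k : R) * (f (n - k) * g k) := by
  rw [binomConv, ← Nat.sum_antidiagonal_swap]
  simp only [Prod.fst_swap, Prod.snd_swap]
  rw [Nat.sum_antidiagonal_eq_sum_range_succ fun i j => (n.choose j : R) * (f j * g i)]
  refine sum_congr rfl fun k hk => ?_
  rw [Nat.choose_symm (Nat.lt_succ_iff.1 (mem_range.1 hk))]

end BinomialConvolution

section ExponentialGeneratingFunction

variable {K : Type*} [Field K] [CharZero K]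

noncomputable def egf (a : ℕ → K) : PowerSeries K :=
  PowerSeries.mk fun n => a n / n.factorial

theorem egf_injective : Function.Injective (egf : (ℕ → K) → PowerSeries K) := by
  intro a b h
  funext n
  have hn := congrArg (PowerSeries.coeff n) h
  simp only [egf, PowerSeries.coeff_mk] at hn
  exact (div_left_inj' (Nat.cast_ne_zero.2 n.factorial_ne_zero)).1 hn

theorem egf_mul (f g : ℕ → K) : egf f * egf g = egf (binomConv f g) := by
  ext n
  simp only [egf, binomConv, PowerSeries.coeff_mul, PowerSeries.coeff_mk, sum_div]
  refine sum_congr rfl fun ij hij => ?_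
  obtain ⟨i, j⟩ := ij
  obtain rfl : i + j = n := mem_antidiagonal.1 hij
  rw [Nat.cast_add_choose]
  field_simp [Nat.factorial_ne_zero]

theorem binomConv_eq_iff_of_egf_mul_eq_one {f g : ℕ → K} (hfg : egf f * egf g = 1)
    (a b : ℕ → K) : a = binomConv f b ↔ b = binomConv g a := by
  rw [← egf_injective.eq_iff, ← egf_injective.eq_iff (a := b), ← egf_mul, ← egf_mul]
  constructor
  · intro h
    rw [h, ← mul_assoc, mul_comm (egf g), hfg, one_mul]
  · intro h
    rw [h, ← mul_assoc, hfg, one_mul]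

end ExponentialGeneratingFunction

theorem dff_succ (lam x : ℝ) (n : ℕ) : dff lam x (n + 1) = dff lam x n * (x - n * lam) :=
  prod_range_succ _ n

theorem dff_add (lam x y : ℝ) : dff lam (x + y) = binomConv (dff lam x) (dff lam y) := by
  funext n
  induction n with
  | zero => simp [dff, binomConv]
  | succ n ih =>
    rw [binomConv, sum_antidiagonal_choose_succ_mul fun i j => dff lam x i * dff lam y j,
      ← sum_add_distrib, dff_succ, ih, binomConv, sum_mul]
    refine sum_congr rfl fun ij hij => ?_
    have hsum : ij.1 + ij.2 = n := mem_antidiagonal.1 hij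
    rw [Nat.choose_symm_of_eq_add hsum.symm, dff_succ, dff_succ, ← hsum]
    push_cast
    ring

theorem egf_dff_zero (lam : ℝ) : egf (dff lam 0) = 1 := by
  ext n
  rw [egf, PowerSeries.coeff_mk, PowerSeries.coeff_one]
  cases n with
  | zero => simp [dff]
  | succ n => simp [dff, prod_range_succ']

theorem egf_dff_mul_egf_dff_neg (lam x : ℝ) : egf (dff lam x) * egf (dff lam (-x)) = 1 := by
  rw [egf_mul, ← dff_add, add_neg_cancel, egf_dff_zero]

theorem dff_neg_one (lam : ℝ) (m : ℕ) : dff lam (-1) m = (-1) ^ m * drf lam 1 m := by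
  calc dff lam (-1) m = ∏ i ∈ range m, (-1) * (1 + i * lam) :=
        prod_congr rfl fun i _ => by ring
    _ = (-1) ^ m * drf lam 1 m := by rw [prod_mul_distrib, prod_const, card_range, drf]

theorem stmt3_general (lam : ℝ) (a b : ℕ → ℝ) :
    (∀ n : ℕ, a n = ∑ k ∈ Finset.range (n + 1),
        (Nat.choose n k : ℝ) * dff lam 1 (n - k) * b k) ↔
    (∀ n : ℕ, b n = ∑ k ∈ Finset.range (n + 1),
        (Nat.choose n k : ℝ) * (-1 : ℝ) ^ (n - k) * drf lam 1 (n - k) * a k) := by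
  have key := binomConv_eq_iff_of_egf_mul_eq_one (egf_dff_mul_egf_dff_neg lam 1) a b
  simpa only [funext_iff, binomConv_eq_sum_range, dff_neg_one, mul_assoc] using key

theorem stmt3 (lam : ℝ) (hlam : lam ≠ 0) (a b : ℕ → ℝ) :
    (∀ n : ℕ, a n = ∑ k ∈ Finset.range (n + 1),
        (Nat.choose n k : ℝ) * dff lam 1 (n - k) * b k) ↔
    (∀ n : ℕ, b n = ∑ k ∈ Finset.range (n + 1),
        (Nat.choose n k : ℝ) * (-1 : ℝ) ^ (n - k) * drf lam 1 (n - k) * a k) :=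
  stmt3_general lam a b
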